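/- (Corollary 1, Robust DDP, trajectory form.) Let T ≥ 1 be a natural number. Suppose that for each t ∈ {0, …, T−1} we are given reference points x_t^r ∈ ℝⁿ, u_t^r ∈ ℝᵐ, w_t^r ∈ ℝᵈ, a symmetric (1+n)×(1+n) matrix P_t, symmetric (1+n+m+d)×(1+n+m+d) matrices Q_t and M_t, a vector k_t¹ ∈ ℝᵐ and an m×n matrix K_t², and additionally a reference point x_T^r ∈ ℝⁿ and a symmetric (1+n)×(1+n) matrix P_T. For t ∈ {0, …, T} define Ṽ_t(x) := η_t(x)ᵀ P_t η_t(x), where η_t(x) is the concatenation of 1 and x − x_t^r; for t ∈ {0, …, T−1} define π̃_t(x) := u_t^r + k_t¹ + K_t²(x − x_t^r), and let ξ_t(x,u,w) be the concatenation of 1, x−x_t^r, u−u_t^r, w−w_t^r. Assume for each t ∈ {0, …, T−1}: (i) for all x, u, w: f0(x,u) + Ṽ_{t+1}(f(x,u,w)) ≤ ξ_t(x,u,w)ᵀ Q_t ξ_t(x,u,w); (ii) for all x, u, w with w ∈ C(g(x,u,w)): ξ_t(x,u,w)ᵀ M_t ξ_t(x,u,w) ≥ 0; (iii) E(k_t¹,K_t²)ᵀ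 (Q_t + M_t − P̂_t) E(k_t¹,K_t²) is negative definite. Let V_T : ℝⁿ → ℝ be a terminal cost with V_T(x) ≤ Ṽ_T(x) for all x ∈ ℝⁿ. Then for every pair of sequences x₀, …, x_T ∈ ℝⁿ and w₀, …, w_{T−1} ∈ ℝᵈ satisfying x_{t+1} = f(x_t, π̃_t(x_t), w_t) and w_t ∈ C(g(x_t, π̃_t(x_t), w_t)) for all t ∈ {0, …, T−1}: Σ_{t=0}^{T−1} f0(x_t, π̃_t(x_t)) + V_T(x_T) ≤ Ṽ_0(x₀). -/

import Mathlib

/-! Under the affine policy the vector `ξ_t` is the image under `E(k_t¹, K_t²)` of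
`(1, x_t - x_t^r, w_t - w_t^r)`, so hypothesis (iii) makes `ξ_tᵀ (Q_t + M_t - P̂_t) ξ_t ≤ 0`,
and `ξ_tᵀ P̂_t ξ_t = Ṽ_t(x_t)`. Along an admissible transition (i) and (ii) (an S-procedure
multiplier) then give the dissipation inequality
`f0(x_t, π̃_t(x_t)) + Ṽ_{t+1}(x_{t+1}) ≤ Ṽ_t(x_t)`, which telescopes over `t < T`;
`V_T ≤ Ṽ_T` closes the bound. -/

open Matrix

/-- Index type for the vector `ξ = (1, δx, δu, δw)` of size `1+n+m+d`. -/
abbrev XiIdx (n m d : ℕ) := Unit ⊕ (Fin n ⊕ (Fin m ⊕ Fin d))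

/-- Index type for the vector `η = (1, δx)` of size `1+n`. -/
abbrev EtaIdx (n : ℕ) := Unit ⊕ Fin n

/-- Index type for `(τ, a, b) ∈ ℝ × ℝⁿ × ℝᵈ` of size `1+n+d`. -/
abbrev TabIdx (n d : ℕ) := Unit ⊕ (Fin n ⊕ Fin d)

/-- The vector `ξ(x,u,w) = (1, x - x_r, u - u_r, w - w_r)`. -/
def xiVec {n m d : ℕ} (xr : Fin n → ℝ) (ur : Fin m → ℝ) (wr : Fin d → ℝ)
    (x : Fin n → ℝ) (u : Fin m → ℝ) (w : Fin d → ℝ) : XiIdx n m d → ℝ :=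
  Sum.elim (fun _ => 1) (Sum.elim (x - xr) (Sum.elim (u - ur) (w - wr)))

/-- The vector `η(x) = (1, x - x_r)`. -/
def etaVec {n : ℕ} (xr : Fin n → ℝ) (x : Fin n → ℝ) : EtaIdx n → ℝ :=
  Sum.elim (fun _ => 1) (x - xr)

/-- The `(1+n+m+d)×(1+n+d)` matrix `E(k¹,K²)` mapping `(τ,a,b)` to
`(τ, a, τ·k¹ + K²a, b)`. -/
def Emat {n m d : ℕ} (k1 : Fin m → ℝ) (K2 : Matrix (Fin m) (Fin n) ℝ) :
    Matrix (XiIdx n m d) (TabIdx n d) ℝ :=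
  Matrix.of fun i j =>
    match i, j with
    | Sum.inl _, Sum.inl _ => 1
    | Sum.inl _, Sum.inr _ => 0
    | Sum.inr (Sum.inl p), Sum.inr (Sum.inl q) => if p = q then (1 : ℝ) else 0
    | Sum.inr (Sum.inl _), _ => 0
    | Sum.inr (Sum.inr (Sum.inl p)), Sum.inl _ => k1 p
    | Sum.inr (Sum.inr (Sum.inl p)), Sum.inr (Sum.inl q) => K2 p q
    | Sum.inr (Sum.inr (Sum.inl _)), Sum.inr (Sum.inr _) => 0
    | Sum.inr (Sum.inr (Sum.inr p)), Sum.inr (Sum.inr q) => if p = q then (1 : ℝ) else 0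
    | Sum.inr (Sum.inr (Sum.inr _)), _ => 0

/-- The injection matrix of the leading principal `(1+n)` block into `1+n+m+d`. -/
def Jmat {n m d : ℕ} : Matrix (XiIdx n m d) (EtaIdx n) ℝ :=
  Matrix.of fun i j =>
    match i, j with
    | Sum.inl _, Sum.inl _ => 1
    | Sum.inr (Sum.inl p), Sum.inr q => if p = q then (1 : ℝ) else 0
    | _, _ => 0

/-- `P̂`: the `(1+n+m+d)×(1+n+m+d)` matrix with `P` as its leading principal
`(1+n)×(1+n)` block and all other entries zero. -/
def Phat {n m d : ℕ} (P : Matrix (EtaIdx n) (EtaIdx n) ℝ) :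
    Matrix (XiIdx n m d) (XiIdx n m d) ℝ :=
  (Jmat (n := n) (m := m) (d := d) * P : Matrix (XiIdx n m d) (EtaIdx n) ℝ) *
    (Jmat (n := n) (m := m) (d := d))ᵀ

/-- The affine policy `π̃_t(x) = u_t^r + k_t¹ + K_t²(x - x_t^r)`. -/
def affPolicy {n m : ℕ} (ur : Fin m → ℝ) (xr : Fin n → ℝ) (k1 : Fin m → ℝ)
    (K2 : Matrix (Fin m) (Fin n) ℝ) (x : Fin n → ℝ) : Fin m → ℝ :=
  ur + k1 + K2.mulVec (x - xr)

/-- The argument `(τ, a, b) = (1, x - x_r, w - w_r)` of `E(k¹,K²)`. -/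
def tabVec {n d : ℕ} (xr : Fin n → ℝ) (wr : Fin d → ℝ)
    (x : Fin n → ℝ) (w : Fin d → ℝ) : TabIdx n d → ℝ :=
  Sum.elim (fun _ => 1) (Sum.elim (x - xr) (w - wr))

/-- The quadratic value-function approximation `Ṽ(x) = η(x)ᵀ P η(x)`. -/
def quadValue {n : ℕ} (xr : Fin n → ℝ) (P : Matrix (EtaIdx n) (EtaIdx n) ℝ)
    (x : Fin n → ℝ) : ℝ :=
  etaVec xr x ⬝ᵥ P *ᵥ etaVec xr x

theorem Fin.sum_add_le_of_add_succ_le_castSucc {α : Type*} [AddCommGroup α] [PartialOrder α]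
    [IsOrderedAddMonoid α] {T : ℕ} (a : Fin T → α) (V : Fin (T + 1) → α)
    (h : ∀ t, a t + V t.succ ≤ V t.castSucc) :
    ∑ t, a t + V (Fin.last T) ≤ V 0 :=
  calc ∑ t, a t + V (Fin.last T)
      ≤ ∑ t : Fin T, (V t.castSucc - V t.succ) + V (Fin.last T) := by
        gcongr with t
        exact le_sub_iff_add_le.mpr (h t)
    _ = V 0 := by
        rw [Finset.sum_sub_distrib, sub_add_eq_add_sub, ← Fin.sum_univ_castSucc,
          Fin.sum_univ_succ, add_sub_cancel_right]

theorem Matrix.dotProduct_transpose_mul_mul_mulVec {ι κ R : Type*} [Fintype ι] [Fintype κ]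
    [CommSemiring R] (A : Matrix ι κ R) (N : Matrix ι ι R) (v : κ → R) :
    v ⬝ᵥ (Aᵀ * N * A) *ᵥ v = (A *ᵥ v) ⬝ᵥ N *ᵥ (A *ᵥ v) := by
  rw [Matrix.mul_assoc, ← mulVec_mulVec, ← mulVec_mulVec, dotProduct_mulVec, vecMul_transpose]

theorem Matrix.PosSemidef.dotProduct_mulVec_nonpos_of_neg_transpose_mul_mul {ι κ : Type*}
    [Fintype ι] [Fintype κ] {A : Matrix ι κ ℝ} {N : Matrix ι ι ℝ}
    (h : (-(Aᵀ * N * A)).PosSemidef) (v : κ → ℝ) :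
    (A *ᵥ v) ⬝ᵥ N *ᵥ (A *ᵥ v) ≤ 0 := by
  have := h.dotProduct_mulVec_nonneg v
  rw [star_trivial, neg_mulVec, dotProduct_neg, dotProduct_transpose_mul_mul_mulVec] at this
  exact neg_nonneg.mp this

section Stage

variable {n m d : ℕ} (xr : Fin n → ℝ) (ur : Fin m → ℝ) (wr : Fin d → ℝ)

theorem Emat_mulVec_tabVec (k1 : Fin m → ℝ) (K2 : Matrix (Fin m) (Fin n) ℝ)
    (x : Fin n → ℝ) (w : Fin d → ℝ) :
    Emat k1 K2 *ᵥ tabVec xr wr x w = xiVec xr ur wr x (affPolicy ur xr k1 K2 x) w := by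
  funext i
  rcases i with _ | (p | (p | p)) <;>
    simp [mulVec, dotProduct, Fintype.sum_sum_type, Emat, tabVec, xiVec, affPolicy, ite_mul]
  ring

theorem Jmat_transpose_mulVec_xiVec (x : Fin n → ℝ) (u : Fin m → ℝ) (w : Fin d → ℝ) :
    (Jmat (m := m) (d := d))ᵀ *ᵥ xiVec xr ur wr x u w = etaVec xr x := by
  funext i
  rcases i with _ | p <;>
    simp [mulVec, dotProduct, Fintype.sum_sum_type, Jmat, xiVec, etaVec, ite_mul]

theorem xiVec_dotProduct_Phat_mulVec (P : Matrix (EtaIdx n) (EtaIdx n) ℝ)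
    (x : Fin n → ℝ) (u : Fin m → ℝ) (w : Fin d → ℝ) :
    xiVec xr ur wr x u w ⬝ᵥ Phat P *ᵥ xiVec xr ur wr x u w = quadValue xr P x := by
  rw [Phat, quadValue]
  simpa only [transpose_transpose, Jmat_transpose_mulVec_xiVec] using
    dotProduct_transpose_mul_mul_mulVec (Jmat (m := m) (d := d))ᵀ P (xiVec xr ur wr x u w)

theorem xiVec_dotProduct_add_le_quadValue {k1 : Fin m → ℝ} {K2 : Matrix (Fin m) (Fin n) ℝ}
    {P : Matrix (EtaIdx n) (EtaIdx n) ℝ} {Q M : Matrix (XiIdx n m d) (XiIdx n m d) ℝ}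
    (hE : PosSemidef (-((Emat (d := d) k1 K2)ᵀ * (Q + M - Phat P) * Emat (d := d) k1 K2)))
    (x : Fin n → ℝ) (w : Fin d → ℝ) :
    xiVec xr ur wr x (affPolicy ur xr k1 K2 x) w ⬝ᵥ Q *ᵥ xiVec xr ur wr x (affPolicy ur xr k1 K2 x) w
        + xiVec xr ur wr x (affPolicy ur xr k1 K2 x) w ⬝ᵥ
          M *ᵥ xiVec xr ur wr x (affPolicy ur xr k1 K2 x) w ≤
      quadValue xr P x := by
  have h := hE.dotProduct_mulVec_nonpos_of_neg_transpose_mul_mul (tabVec xr wr x w)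
  rw [Emat_mulVec_tabVec xr ur, sub_mulVec, add_mulVec, dotProduct_sub, dotProduct_add,
    xiVec_dotProduct_Phat_mulVec] at h
  exact sub_nonpos.mp h

end Stage

theorem robust_ddp_corollary_general
    (n m d l : ℕ) (T : ℕ)
    (f : (Fin n → ℝ) → (Fin m → ℝ) → (Fin d → ℝ) → (Fin n → ℝ))
    (g : (Fin n → ℝ) → (Fin m → ℝ) → (Fin d → ℝ) → (Fin l → ℝ))
    (f0 : (Fin n → ℝ) → (Fin m → ℝ) → ℝ)
    (C : (Fin l → ℝ) → Set (Fin d → ℝ))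
    (xr : Fin (T + 1) → Fin n → ℝ)
    (ur : Fin T → Fin m → ℝ) (wr : Fin T → Fin d → ℝ)
    (P : Fin (T + 1) → Matrix (EtaIdx n) (EtaIdx n) ℝ)
    (Q M : Fin T → Matrix (XiIdx n m d) (XiIdx n m d) ℝ)
    (k1 : Fin T → Fin m → ℝ) (K2 : Fin T → Matrix (Fin m) (Fin n) ℝ)
    (h1 : ∀ (t : Fin T) (x : Fin n → ℝ) (u : Fin m → ℝ) (w : Fin d → ℝ),
      f0 x u +
          etaVec (xr t.succ) (f x u w) ⬝ᵥ
            (P t.succ).mulVec (etaVec (xr t.succ) (f x u w)) ≤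
        xiVec (xr t.castSucc) (ur t) (wr t) x u w ⬝ᵥ
          (Q t).mulVec (xiVec (xr t.castSucc) (ur t) (wr t) x u w))
    (h2 : ∀ (t : Fin T) (x : Fin n → ℝ) (u : Fin m → ℝ) (w : Fin d → ℝ),
      w ∈ C (g x u w) →
      0 ≤ xiVec (xr t.castSucc) (ur t) (wr t) x u w ⬝ᵥ
            (M t).mulVec (xiVec (xr t.castSucc) (ur t) (wr t) x u w))
    (h3 : ∀ t : Fin T,
      (-((Emat (n := n) (m := m) (d := d) (k1 t) (K2 t))ᵀ *
          (Q t + M t - Phat (P t.castSucc)) *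
          Emat (n := n) (m := m) (d := d) (k1 t) (K2 t))).PosDef)
    (VT : (Fin n → ℝ) → ℝ)
    (hVT : ∀ x : Fin n → ℝ,
      VT x ≤ etaVec (xr (Fin.last T)) x ⬝ᵥ
        (P (Fin.last T)).mulVec (etaVec (xr (Fin.last T)) x))
    (x : Fin (T + 1) → Fin n → ℝ) (w : Fin T → Fin d → ℝ)
    (hdyn : ∀ t : Fin T,
      x t.succ = f (x t.castSucc)
        (affPolicy (ur t) (xr t.castSucc) (k1 t) (K2 t) (x t.castSucc)) (w t))
    (hadm : ∀ t : Fin T,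
      w t ∈ C (g (x t.castSucc)
        (affPolicy (ur t) (xr t.castSucc) (k1 t) (K2 t) (x t.castSucc)) (w t))) :
    (∑ t : Fin T,
        f0 (x t.castSucc)
          (affPolicy (ur t) (xr t.castSucc) (k1 t) (K2 t) (x t.castSucc))) +
        VT (x (Fin.last T)) ≤
      etaVec (xr 0) (x 0) ⬝ᵥ (P 0).mulVec (etaVec (xr 0) (x 0)) := by
  have step : ∀ t : Fin T,
      f0 (x t.castSucc) (affPolicy (ur t) (xr t.castSucc) (k1 t) (K2 t) (x t.castSucc)) +
          quadValue (xr t.succ) (P t.succ) (x t.succ) ≤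
        quadValue (xr t.castSucc) (P t.castSucc) (x t.castSucc) := by
    intro t
    have hQ : f0 (x t.castSucc) (affPolicy (ur t) (xr t.castSucc) (k1 t) (K2 t) (x t.castSucc)) +
        quadValue (xr t.succ) (P t.succ) (x t.succ) ≤ _ := hdyn t ▸ h1 t _ _ (w t)
    linarith [h2 t _ _ _ (hadm t),
      xiVec_dotProduct_add_le_quadValue (xr t.castSucc) (ur t) (wr t) (h3 t).posSemidef
        (x t.castSucc) (w t)]
  refine le_trans ?_
    (Fin.sum_add_le_of_add_succ_le_castSucc _ (fun t => quadValue (xr t) (P t) (x t)) step)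
  gcongr
  exact hVT _

/-- **Corollary 1 (Robust DDP, trajectory form).** The quadratic value-function
approximations produced by the robust DDP backward pass upper-bound the
accumulated cost of the generated affine policy along every admissible
uncertainty realization. -/
theorem robust_ddp_corollary
    (n m d l : ℕ) (T : ℕ) (hT : 1 ≤ T)
    (f : (Fin n → ℝ) → (Fin m → ℝ) → (Fin d → ℝ) → (Fin n → ℝ))
    (g : (Fin n → ℝ) → (Fin m → ℝ) → (Fin d → ℝ) → (Fin l → ℝ))
    (f0 : (Fin n → ℝ) → (Fin m → ℝ) → ℝ)
    (C : (Fin l → ℝ) → Set (Fin d → ℝ))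
    (xr : Fin (T + 1) → Fin n → ℝ)
    (ur : Fin T → Fin m → ℝ) (wr : Fin T → Fin d → ℝ)
    (P : Fin (T + 1) → Matrix (EtaIdx n) (EtaIdx n) ℝ)
    (hPsymm : ∀ t, (P t).IsSymm)
    (Q M : Fin T → Matrix (XiIdx n m d) (XiIdx n m d) ℝ)
    (hQsymm : ∀ t, (Q t).IsSymm) (hMsymm : ∀ t, (M t).IsSymm)
    (k1 : Fin T → Fin m → ℝ) (K2 : Fin T → Matrix (Fin m) (Fin n) ℝ)
    (h1 : ∀ (t : Fin T) (x : Fin n → ℝ) (u : Fin m → ℝ) (w : Fin d → ℝ),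
      f0 x u +
          etaVec (xr t.succ) (f x u w) ⬝ᵥ
            (P t.succ).mulVec (etaVec (xr t.succ) (f x u w)) ≤
        xiVec (xr t.castSucc) (ur t) (wr t) x u w ⬝ᵥ
          (Q t).mulVec (xiVec (xr t.castSucc) (ur t) (wr t) x u w))
    (h2 : ∀ (t : Fin T) (x : Fin n → ℝ) (u : Fin m → ℝ) (w : Fin d → ℝ),
      w ∈ C (g x u w) →
      0 ≤ xiVec (xr t.castSucc) (ur t) (wr t) x u w ⬝ᵥ
            (M t).mulVec (xiVec (xr t.castSucc) (ur t) (wr t) x u w))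
    (h3 : ∀ t : Fin T,
      (-((Emat (n := n) (m := m) (d := d) (k1 t) (K2 t))ᵀ *
          (Q t + M t - Phat (P t.castSucc)) *
          Emat (n := n) (m := m) (d := d) (k1 t) (K2 t))).PosDef)
    (VT : (Fin n → ℝ) → ℝ)
    (hVT : ∀ x : Fin n → ℝ,
      VT x ≤ etaVec (xr (Fin.last T)) x ⬝ᵥ
        (P (Fin.last T)).mulVec (etaVec (xr (Fin.last T)) x))
    (x : Fin (T + 1) → Fin n → ℝ) (w : Fin T → Fin d → ℝ)
    (hdyn : ∀ t : Fin T,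
      x t.succ = f (x t.castSucc)
        (affPolicy (ur t) (xr t.castSucc) (k1 t) (K2 t) (x t.castSucc)) (w t))
    (hadm : ∀ t : Fin T,
      w t ∈ C (g (x t.castSucc)
        (affPolicy (ur t) (xr t.castSucc) (k1 t) (K2 t) (x t.castSucc)) (w t))) :
    (∑ t : Fin T,
        f0 (x t.castSucc)
          (affPolicy (ur t) (xr t.castSucc) (k1 t) (K2 t) (x t.castSucc))) +
        VT (x (Fin.last T)) ≤
      etaVec (xr 0) (x 0) ⬝ᵥ (P 0).mulVec (etaVec (xr 0) (x 0)) :=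
  robust_ddp_corollary_general n m d l T f g f0 C xr ur wr P Q M k1 K2 h1 h2 h3 VT hVT x w hdyn hadm
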